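/- Let 1 < p < q < ∞ and 0 < θ < ∞. If ω ∈ A^{ρ,θ}_{p,q}(ℝ^d), then ω^q ∈ A^{ρ,θ̃}_t(ℝ^d) with t = 1 + q/p' and θ̃ = θ/(1/q + 1/p'), where p' = p/(p−1). -/

import Mathlib

/-! Writing `t = 1 + q/p'` and `s = 1/(1/q + 1/p')`, one has `1/t = s/q`, `1/t' = s/p'` and
`(ω^q)^(-t'/t) = ω^(-p')`, so the `A_t` quantity of `ω^q` on a ball is exactly the `s`-th power
of the `A_{p,q}` quantity of `ω`; raising the `A_{p,q}` bound to the power `s` gives the claim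
with constant `C^s`. -/

open MeasureTheory

noncomputable section

def vol {d : ℕ} (S : Set (EuclideanSpace ℝ (Fin d))) : ℝ := (volume S).toReal

lemma one_div_one_add_div {q a : ℝ} (hq : 0 < q) (ha : 0 < a) :
    1 / (1 + q / a) = 1 / q * (1 / (1 / q + 1 / a)) := by
  field_simp

lemma one_sub_one_div_one_add_div {q a : ℝ} (hq : 0 < q) (ha : 0 < a) :
    1 - 1 / (1 + q / a) = 1 / a * (1 / (1 / q + 1 / a)) := by
  field_simp
  ring

lemma rpow_rpow_neg_one_div_one_add_div_sub_one {w q a : ℝ} (hw : 0 ≤ w) (hq : q ≠ 0) :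
    (w ^ q) ^ (-(1 / ((1 + q / a) - 1))) = w ^ (-a) := by
  rw [← Real.rpow_mul hw, add_sub_cancel_left, one_div_div]
  field_simp

lemma rpow_mul_rpow_le_rpow_of_le {x y K α β s : ℝ} (hx : 0 ≤ x) (hy : 0 ≤ y) (hs : 0 ≤ s)
    (h : x ^ α * y ^ β ≤ K) : x ^ (α * s) * y ^ (β * s) ≤ K ^ s := by
  rw [Real.rpow_mul hx, Real.rpow_mul hy,
    ← Real.mul_rpow (Real.rpow_nonneg hx _) (Real.rpow_nonneg hy _)]
  exact Real.rpow_le_rpow (by positivity) h hs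

lemma ball_average_nonneg {d : ℕ} {f : EuclideanSpace ℝ (Fin d) → ℝ} (hf : ∀ x, 0 ≤ f x)
    (x₀ : EuclideanSpace ℝ (Fin d)) (r : ℝ) :
    0 ≤ (1 / vol (Metric.ball x₀ r)) * ∫ x in Metric.ball x₀ r, f x :=
  mul_nonneg (by unfold vol; positivity) (integral_nonneg hf)

theorem stmt11_general (d : ℕ) (p q θ : ℝ) (hp : 1 < p) (hpq : p < q)
    (ρ : EuclideanSpace ℝ (Fin d) → ℝ) (hρ : ∀ x, 0 < ρ x)
    (ω : EuclideanSpace ℝ (Fin d) → ℝ) (hω : ∀ x, 0 ≤ ω x)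
    (C : ℝ) (hC : 0 < C)
    (hApq : ∀ (x₀ : EuclideanSpace ℝ (Fin d)) (r : ℝ), 0 < r →
      ((1 / vol (Metric.ball x₀ r)) * ∫ x in Metric.ball x₀ r, ω x ^ q) ^ (1 / q) *
          ((1 / vol (Metric.ball x₀ r)) *
              ∫ x in Metric.ball x₀ r, ω x ^ (-(p / (p - 1)))) ^ (1 / (p / (p - 1))) ≤
        C * (1 + r / ρ x₀) ^ θ) :
    ∃ C' > (0 : ℝ), ∀ (x₀ : EuclideanSpace ℝ (Fin d)) (r : ℝ), 0 < r →
      ((1 / vol (Metric.ball x₀ r)) *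
          ∫ x in Metric.ball x₀ r, ω x ^ q) ^ (1 / (1 + q / (p / (p - 1)))) *
        ((1 / vol (Metric.ball x₀ r)) *
            ∫ x in Metric.ball x₀ r,
              (ω x ^ q) ^ (-(1 / ((1 + q / (p / (p - 1))) - 1)))) ^
          (1 - 1 / (1 + q / (p / (p - 1)))) ≤
        C' * (1 + r / ρ x₀) ^ (θ / (1 / q + 1 / (p / (p - 1)))) := by
  have hq : 0 < q := by linarith
  set p' := p / (p - 1)
  have hp' : 0 < p' := div_pos (by linarith) (by linarith)
  set s := 1 / (1 / q + 1 / p')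
  refine ⟨C ^ s, by positivity, fun x₀ r hr => ?_⟩
  have hbase : 0 ≤ 1 + r / ρ x₀ := by have := hρ x₀; positivity
  simp only [rpow_rpow_neg_one_div_one_add_div_sub_one (hω _) hq.ne']
  rw [one_sub_one_div_one_add_div hq hp', one_div_one_add_div hq hp', div_eq_mul_one_div θ,
    Real.rpow_mul hbase, ← Real.mul_rpow hC.le (Real.rpow_nonneg hbase _)]
  exact rpow_mul_rpow_le_rpow_of_le (ball_average_nonneg (fun x => Real.rpow_nonneg (hω x) _) _ _)
    (ball_average_nonneg (fun x => Real.rpow_nonneg (hω x) _) _ _) (by positivity) (hApq x₀ r hr)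

/-- for `1 < p < q < ∞`, `ω ∈ A^{ρ,θ}_{p,q}` implies
`ω^q ∈ A^{ρ,θ̃}_t` with `t = 1 + q/p'` and `θ̃ = θ/(1/q + 1/p')`, `p' = p/(p-1)`.
Here `t' = t/(t-1)` so `t'/t = 1/(t-1)` and `1/t' = 1 - 1/t`. -/
theorem stmt11 (d : ℕ) (p q θ : ℝ) (hp : 1 < p) (hpq : p < q) (hθ : 0 < θ)
    (ρ : EuclideanSpace ℝ (Fin d) → ℝ) (hρ : ∀ x, 0 < ρ x)
    (ω : EuclideanSpace ℝ (Fin d) → ℝ) (hω : ∀ x, 0 ≤ ω x)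
    (C : ℝ) (hC : 0 < C)
    (hApq : ∀ (x₀ : EuclideanSpace ℝ (Fin d)) (r : ℝ), 0 < r →
      ((1 / vol (Metric.ball x₀ r)) * ∫ x in Metric.ball x₀ r, ω x ^ q) ^ (1 / q) *
          ((1 / vol (Metric.ball x₀ r)) *
              ∫ x in Metric.ball x₀ r, ω x ^ (-(p / (p - 1)))) ^ (1 / (p / (p - 1))) ≤
        C * (1 + r / ρ x₀) ^ θ) :
    ∃ C' > (0 : ℝ), ∀ (x₀ : EuclideanSpace ℝ (Fin d)) (r : ℝ), 0 < r →
      ((1 / vol (Metric.ball x₀ r)) *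
          ∫ x in Metric.ball x₀ r, ω x ^ q) ^ (1 / (1 + q / (p / (p - 1)))) *
        ((1 / vol (Metric.ball x₀ r)) *
            ∫ x in Metric.ball x₀ r,
              (ω x ^ q) ^ (-(1 / ((1 + q / (p / (p - 1))) - 1)))) ^
          (1 - 1 / (1 + q / (p / (p - 1)))) ≤
        C' * (1 + r / ρ x₀) ^ (θ / (1 / q + 1 / (p / (p - 1)))) :=
  stmt11_general d p q θ hp hpq ρ hρ ω hω C hC hApq
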